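/- arXiv:1904.00652 — 4 statements merged into one kernel-verified Lean document; each statement's English description precedes it below -/
import Mathlib

section
/- A measure-preserving system (X, B, m, T) is exact if and only if lim_{n→∞} m(T^n A) = 1 for every A ∈ B with m(A) > 0 and T^n A ∈ B for every n ≥ 1. -/
open MeasureTheory Filter Topology

/-!
If the system is exact and `m A > 0`, the saturations `T^[n] ⁻¹' (T^[n] '' A)` increase to a set
lying in the tail σ-algebra that contains `A`; hence it has measure one, and
`m (T^[n] '' A) = m (T^[n] ⁻¹' (T^[n] '' A)) → 1`. Conversely, a tail set `B = T^[n] ⁻¹' Aₙ`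
satisfies `m (T^[n] '' B) ≤ m Aₙ = m B`, so if `m B > 0` the images force `m B = 1`.
-/

namespace MeasureTheory

variable {X : Type*} {T : X → X}

theorem monotone_preimage_image_iterate (T : X → X) (A : Set X) :
    Monotone fun n => T^[n] ⁻¹' (T^[n] '' A) := by
  refine monotone_nat_of_le_succ fun n x hx => ?_
  change T^[n + 1] x ∈ T^[n + 1] '' A
  rw [Function.iterate_succ', Set.image_comp]
  exact Set.mem_image_of_mem T hx

theorem iUnion_preimage_image_iterate_eq_preimage (T : X → X) (A : Set X) (n : ℕ) :
    (⋃ k, T^[k] ⁻¹' (T^[k] '' A)) = T^[n] ⁻¹' ⋃ k, T^[k] ⁻¹' (T^[k + n] '' A) := by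
  simp only [Set.preimage_iUnion, ← Set.preimage_comp, ← Function.iterate_add]
  exact ((monotone_preimage_image_iterate T A).iSup_nat_add n).symm

variable [MeasurableSpace X]

/-- `B` belongs to the tail σ-algebra `⋂ n, T^[n] ⁻¹' 𝓑`. -/
def IsTailSet (T : X → X) (B : Set X) : Prop :=
  ∀ n : ℕ, ∃ A : Set X, MeasurableSet A ∧ B = T^[n] ⁻¹' A

def IsExact (T : X → X) (m : Measure X) : Prop :=
  ∀ B : Set X, IsTailSet T B → m B = 0 ∨ m B = 1

theorem measurableSet_image_iterate
    (hTimg : ∀ A : Set X, MeasurableSet A → MeasurableSet (T '' A)) (n : ℕ) {A : Set X}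
    (hA : MeasurableSet A) : MeasurableSet (T^[n] '' A) := by
  induction n with
  | zero => simpa using hA
  | succ k ih =>
    rw [Function.iterate_succ', Set.image_comp]
    exact hTimg _ ih

theorem isTailSet_iUnion_preimage_image_iterate (hT : Measurable T)
    (hTimg : ∀ A : Set X, MeasurableSet A → MeasurableSet (T '' A)) {A : Set X}
    (hA : MeasurableSet A) : IsTailSet T (⋃ k, T^[k] ⁻¹' (T^[k] '' A)) := fun n =>
  ⟨_, MeasurableSet.iUnion fun k => (hT.iterate k) (measurableSet_image_iterate hTimg _ hA),
    iUnion_preimage_image_iterate_eq_preimage T A n⟩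

theorem MeasurePreserving.measure_image_preimage_le {Y : Type*} [MeasurableSpace Y]
    {μ : Measure X} {ν : Measure Y} {f : X → Y} (hf : MeasurePreserving f μ ν) {A : Set Y}
    (hA : MeasurableSet A) : ν (f '' (f ⁻¹' A)) ≤ μ (f ⁻¹' A) := by
  rw [hf.measure_preimage hA.nullMeasurableSet]
  exact measure_mono (Set.image_preimage_subset f A)

variable {m : Measure X}

theorem IsExact.tendsto_measure_image_iterate (hexact : IsExact T m)
    (hT : MeasurePreserving T m m) (hTimg : ∀ A : Set X, MeasurableSet A → MeasurableSet (T '' A))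
    {A : Set X} (hA : MeasurableSet A) (hApos : 0 < m A) :
    Tendsto (fun n : ℕ => m (T^[n] '' A)) atTop (𝓝 1) := by
  set S : ℕ → Set X := fun n => T^[n] ⁻¹' (T^[n] '' A)
  have hSpos : 0 < m (⋃ k, S k) :=
    hApos.trans_le (measure_mono (Set.subset_iUnion_of_subset 0 (by simp [S])))
  have hS1 : m (⋃ k, S k) = 1 :=
    (hexact _ (isTailSet_iUnion_preimage_image_iterate hT.measurable hTimg hA)).resolve_left
      hSpos.ne'
  have hlim := tendsto_measure_iUnion_atTop (μ := m) (monotone_preimage_image_iterate T A)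
  rw [hS1] at hlim
  refine hlim.congr fun n => ?_
  exact (hT.iterate n).measure_preimage (measurableSet_image_iterate hTimg n hA).nullMeasurableSet

theorem isExact_of_tendsto_measure_image_iterate [IsProbabilityMeasure m]
    (hT : MeasurePreserving T m m)
    (hlim : ∀ A : Set X, MeasurableSet A → 0 < m A →
      Tendsto (fun n : ℕ => m (T^[n] '' A)) atTop (𝓝 1)) :
    IsExact T m := by
  intro B hB
  have hBmeas : MeasurableSet B := by
    obtain ⟨A₀, hA₀, rfl⟩ := hB 0
    exact hA₀
  rcases (zero_le : 0 ≤ m B).eq_or_lt with h | hpos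
  · exact Or.inl h.symm
  have hle : ∀ n, m (T^[n] '' B) ≤ m B := fun n => by
    obtain ⟨A, hA, rfl⟩ := hB n
    exact (hT.iterate n).measure_image_preimage_le hA
  exact Or.inr (prob_le_one.antisymm
    (le_of_tendsto (hlim B hBmeas hpos) (Eventually.of_forall hle)))

end MeasureTheory

open MeasureTheory in
/-- A measure-preserving system `(X, 𝓑, m, T)` (with `T` mapping
measurable sets to measurable sets) is exact if and only if `m (T^n A) → 1`
for every measurable `A` with `m A > 0`. -/
theorem stmt_3 {X : Type*} [MeasurableSpace X] (m : Measure X) [IsProbabilityMeasure m]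
    (T : X → X) (hT : MeasurePreserving T m m)
    (hTimg : ∀ A : Set X, MeasurableSet A → MeasurableSet (T '' A)) :
    (∀ B : Set X,
        (∀ n : ℕ, ∃ A : Set X, MeasurableSet A ∧ B = T^[n] ⁻¹' A) → m B = 0 ∨ m B = 1) ↔
      (∀ A : Set X, MeasurableSet A → 0 < m A →
        Tendsto (fun n : ℕ => m (T^[n] '' A)) atTop (𝓝 1)) :=
  ⟨fun hexact _ hA hApos => IsExact.tendsto_measure_image_iterate hexact hT hTimg hA hApos,
    isExact_of_tendsto_measure_image_iterate hT⟩
end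

section
/- Every Lebesgue-measurable scrambled set for the Gauss system has Lebesgue measure zero. -/
/-!
If two orbits ever merge, `|T^m x - T^m y|` is eventually `0` and its limsup vanishes; so on a
scrambled set `B` every iterate `T^n` is injective. For a word `w` of `n` digits let `ψ_w` be the
inverse branch of `T^n` on the cylinder of `w` and `E_w = ψ_w⁻¹ B ⊆ [0, 1)`. Sorting the points
of `B` by their first `n` continued-fraction digits gives `B ⊆ ⋃ ψ_w '' E_w`, and the `E_w` are
pairwise disjoint because `T^n` maps `ψ_w z` and `ψ_{w'} z` both to `z`. As every `ψ_w` is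
`2^(1-n)`-Lipschitz, `vol B ≤ 2^(1-n) · ∑ vol E_w ≤ 2^(1-n)` for all `n`.
-/

open MeasureTheory Filter Set Topology

noncomputable def gaussMap (x : ℝ) : ℝ := Int.fract x⁻¹

open Function
open scoped ENNReal NNReal

theorem LipschitzOnWith.volume_image_le {f : ℝ → ℝ} {K : ℝ≥0} {s : Set ℝ}
    (hf : LipschitzOnWith K f s) : volume (f '' s) ≤ K * volume s := by
  simpa [hausdorffMeasure_real] using hf.hausdorffMeasure_image_le zero_le_one

theorem iterate_ne_of_limsup_abs_sub_pos {f : ℝ → ℝ} {x y : ℝ}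
    (h : 0 < limsup (fun m : ℕ => |f^[m] x - f^[m] y|) atTop) (n : ℕ) :
    f^[n] x ≠ f^[n] y := by
  intro hn
  have hzero : (fun m : ℕ => |f^[m] x - f^[m] y|) =ᶠ[atTop] fun _ => 0 := by
    filter_upwards [eventually_ge_atTop n] with m hm
    obtain ⟨k, rfl⟩ := Nat.exists_eq_add_of_le hm
    simp [add_comm n k, iterate_add_apply, hn]
  rw [limsup_congr hzero, limsup_const] at h
  exact h.false

noncomputable section

namespace Gauss

def domain : Set ℝ := {x | x ∈ Ico 0 1 ∧ Irrational x}

def invBranch (k : ℕ) (t : ℝ) : ℝ := (k + t)⁻¹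

def invBranchWord (w : List ℕ) (t : ℝ) : ℝ := w.foldr invBranch t

@[simp]
theorem invBranchWord_cons (k : ℕ) (w : List ℕ) (t : ℝ) :
    invBranchWord (k :: w) t = invBranch k (invBranchWord w t) := rfl

def digits : ℕ → ℝ → List ℕ
  | 0, _ => []
  | n + 1, x => ⌊x⁻¹⌋₊ :: digits n (gaussMap x)

def admissibleWords (n : ℕ) : Set (List ℕ) := {w | w.length = n ∧ ∀ k ∈ w, 1 ≤ k}

theorem measurableSet_domain : MeasurableSet domain :=
  measurableSet_Ico.inter (countable_range ((↑) : ℚ → ℝ)).measurableSet.compl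

theorem pos_of_mem_domain {x : ℝ} (hx : x ∈ domain) : 0 < x :=
  hx.1.1.lt_of_ne' hx.2.ne_zero

theorem one_le_floor_inv {x : ℝ} (hx : x ∈ domain) : 1 ≤ ⌊x⁻¹⌋₊ :=
  Nat.le_floor <| by simpa using (one_le_inv₀ (pos_of_mem_domain hx)).2 hx.1.2.le

theorem mapsTo_gaussMap : MapsTo gaussMap domain domain := fun x hx => by
  have hirr : Irrational (gaussMap x) := hx.2.inv.sub_intCast _
  exact ⟨⟨Int.fract_nonneg _, Int.fract_lt_one _⟩, hirr⟩

theorem invBranch_floor_inv_gaussMap {x : ℝ} (hx : 0 ≤ x) :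
    invBranch ⌊x⁻¹⌋₊ (gaussMap x) = x := by
  rw [invBranch, gaussMap, natCast_floor_eq_intCast_floor (inv_nonneg.2 hx),
    Int.floor_add_fract, inv_inv]

theorem gaussMap_invBranch (k : ℕ) {z : ℝ} (hz : z ∈ Ico 0 1) :
    gaussMap (invBranch k z) = z := by
  rw [gaussMap, invBranch, inv_inv, Int.fract_natCast_add, Int.fract_eq_self.2 hz]

theorem floor_inv_invBranch (k : ℕ) {z : ℝ} (hz : z ∈ Ico 0 1) :
    ⌊(invBranch k z)⁻¹⌋₊ = k := by
  rw [invBranch, inv_inv, Nat.floor_eq_iff (by linarith [hz.1])]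
  constructor <;> linarith [hz.1, hz.2]

theorem mapsTo_invBranch {k : ℕ} (hk : 1 ≤ k) : MapsTo (invBranch k) domain domain := by
  intro z hz
  have hk' : (1 : ℝ) ≤ k := by exact_mod_cast hk
  have hkz : 1 < k + z := by linarith [pos_of_mem_domain hz]
  exact ⟨⟨inv_nonneg.2 (by linarith), inv_lt_one_of_one_lt₀ hkz⟩, (hz.2.natCast_add k).inv⟩

theorem mapsTo_invBranchWord {w : List ℕ} (hw : ∀ k ∈ w, 1 ≤ k) :
    MapsTo (invBranchWord w) domain domain := by
  induction w with
  | nil => exact mapsTo_id _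
  | cons k w ih =>
    simp only [List.forall_mem_cons] at hw
    exact (mapsTo_invBranch hw.1).comp (ih hw.2)

theorem iterate_gaussMap_invBranchWord {w : List ℕ} (hw : ∀ k ∈ w, 1 ≤ k) {z : ℝ}
    (hz : z ∈ domain) : gaussMap^[w.length] (invBranchWord w z) = z := by
  induction w with
  | nil => rfl
  | cons k w ih =>
    simp only [List.forall_mem_cons] at hw
    rw [List.length_cons, iterate_succ_apply, invBranchWord_cons,
      gaussMap_invBranch k (mapsTo_invBranchWord hw.2 hz).1]
    exact ih hw.2

theorem digits_invBranchWord {w : List ℕ} (hw : ∀ k ∈ w, 1 ≤ k) {z : ℝ} (hz : z ∈ domain) :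
    digits w.length (invBranchWord w z) = w := by
  induction w with
  | nil => rfl
  | cons k w ih =>
    simp only [List.forall_mem_cons] at hw
    have hmem := (mapsTo_invBranchWord hw.2 hz).1
    rw [List.length_cons, invBranchWord_cons, digits, floor_inv_invBranch k hmem,
      gaussMap_invBranch k hmem]
    exact congrArg _ (ih hw.2)

theorem invBranchWord_digits {x : ℝ} (hx : x ∈ domain) (n : ℕ) :
    invBranchWord (digits n x) (gaussMap^[n] x) = x := by
  induction n generalizing x with
  | zero => rfl
  | succ n ih =>
    rw [digits, invBranchWord_cons, iterate_succ_apply, ih (mapsTo_gaussMap hx),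
      invBranch_floor_inv_gaussMap hx.1.1]

theorem digits_mem_admissibleWords {x : ℝ} (hx : x ∈ domain) (n : ℕ) :
    digits n x ∈ admissibleWords n := by
  induction n generalizing x with
  | zero => exact ⟨rfl, by simp [digits]⟩
  | succ n ih =>
    obtain ⟨hlen, hpos⟩ := ih (mapsTo_gaussMap hx)
    exact ⟨by simp [digits, hlen], List.forall_mem_cons.2 ⟨one_le_floor_inv hx, hpos⟩⟩

theorem measurable_invBranchWord (w : List ℕ) : Measurable (invBranchWord w) := by
  induction w with
  | nil => exact measurable_id
  | cons k w ih => exact (measurable_const.add ih).inv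

theorem dist_invBranch (k : ℕ) {s t : ℝ} (hs : 0 < k + s) (ht : 0 < k + t) :
    dist (invBranch k s) (invBranch k t) = dist s t / ((k + s) * (k + t)) := by
  rw [invBranch, invBranch, Real.dist_eq, Real.dist_eq, inv_sub_inv hs.ne' ht.ne', abs_div,
    abs_of_pos (mul_pos hs ht), abs_sub_comm]
  ring_nf

theorem lipschitzOnWith_invBranch {k : ℕ} (hk : 1 ≤ k) :
    LipschitzOnWith 1 (invBranch k) (Ici 0) := by
  have hk' : (1 : ℝ) ≤ k := by exact_mod_cast hk
  refine LipschitzOnWith.of_dist_le_mul fun s (hs : 0 ≤ s) t (ht : 0 ≤ t) => ?_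
  rw [dist_invBranch k (by linarith) (by linarith), NNReal.coe_one, one_mul]
  exact div_le_self dist_nonneg (one_le_mul_of_one_le_of_one_le (by linarith) (by linarith))

-- A single branch need not contract (`invBranch 1` has derivative `-1` at `0`); two do.
theorem lipschitzOnWith_invBranch_comp {j k : ℕ} (hj : 1 ≤ j) (hk : 1 ≤ k) :
    LipschitzOnWith 4⁻¹ (invBranch j ∘ invBranch k) (Ici 0) := by
  have hj' : (1 : ℝ) ≤ j := by exact_mod_cast hj
  have hk' : (1 : ℝ) ≤ k := by exact_mod_cast hk
  have hpos : ∀ s : ℝ, 0 ≤ s → 0 < k + s := fun s hs => by linarith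
  have htwo : ∀ s : ℝ, 0 ≤ s → 2 ≤ (k + s) * (j + invBranch k s) := fun s hs => by
    rw [invBranch, mul_add, mul_inv_cancel₀ (hpos s hs).ne']
    nlinarith
  have hj0 : ∀ s : ℝ, 0 ≤ s → 0 < j + invBranch k s := fun s hs =>
    add_pos_of_pos_of_nonneg (by linarith) (inv_nonneg.2 (hpos s hs).le)
  refine LipschitzOnWith.of_dist_le_mul fun s (hs : 0 ≤ s) t (ht : 0 ≤ t) => ?_
  calc dist ((invBranch j ∘ invBranch k) s) ((invBranch j ∘ invBranch k) t)
      = dist s t / (((k + s) * (j + invBranch k s)) * ((k + t) * (j + invBranch k t))) := by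
        rw [comp_apply, comp_apply, dist_invBranch j (hj0 s hs) (hj0 t ht),
          dist_invBranch k (hpos s hs) (hpos t ht), div_div]
        ring_nf
    _ ≤ dist s t / (2 * 2) := by
        gcongr
        exacts [by linarith [htwo s hs], htwo s hs, htwo t ht]
    _ = ↑(4⁻¹ : ℝ≥0) * dist s t := by push_cast; ring

theorem lipschitzOnWith_invBranchWord :
    ∀ {w : List ℕ}, (∀ k ∈ w, 1 ≤ k) →
      LipschitzOnWith (2 * 2⁻¹ ^ w.length) (invBranchWord w) domain
  | [], _ => LipschitzWith.id.lipschitzOnWith.weaken (by norm_num)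
  | [k], hw =>
    ((lipschitzOnWith_invBranch (hw k (by simp))).mono fun _ hz => hz.1.1).weaken (by norm_num)
  | j :: k :: w, hw => by
    simp only [List.forall_mem_cons] at hw
    have h := (lipschitzOnWith_invBranch_comp hw.1 hw.2.1).comp
      (lipschitzOnWith_invBranchWord hw.2.2)
      fun z hz => (mapsTo_invBranchWord hw.2.2 hz).1.1
    exact h.weaken (le_of_eq (by simp only [List.length_cons]; ring))

theorem subset_iUnion_image_invBranchWord {B : Set ℝ} (hB : B ⊆ domain) (n : ℕ) :
    B ⊆ ⋃ w : admissibleWords n, invBranchWord w '' (domain ∩ invBranchWord w ⁻¹' B) := by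
  intro x hx
  have hxn := invBranchWord_digits (hB hx) n
  refine mem_iUnion.2 ⟨⟨digits n x, digits_mem_admissibleWords (hB hx) n⟩, _, ?_, hxn⟩
  exact ⟨(mapsTo_gaussMap.iterate n) (hB hx), by rwa [mem_preimage, hxn]⟩

theorem pairwise_disjoint_preimage_invBranchWord {B : Set ℝ} {n : ℕ}
    (hinj : InjOn gaussMap^[n] B) :
    Pairwise (Disjoint on fun w : admissibleWords n => domain ∩ invBranchWord w ⁻¹' B) := by
  rintro ⟨w, hwn, hw⟩ ⟨w', hwn', hw'⟩ hne
  refine disjoint_left.2 fun z ⟨hz, hzB⟩ ⟨_, hzB'⟩ => hne (Subtype.ext ?_)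
  have hiter := iterate_gaussMap_invBranchWord hw hz
  have hiter' := iterate_gaussMap_invBranchWord hw' hz
  rw [hwn] at hiter
  rw [hwn'] at hiter'
  have hx : invBranchWord w z = invBranchWord w' z := hinj hzB hzB' (hiter.trans hiter'.symm)
  have hdigits := congrArg (digits n) hx
  rwa [← hwn, digits_invBranchWord hw hz, hwn, ← hwn', digits_invBranchWord hw' hz] at hdigits

theorem volume_le_of_injOn_iterate {B : Set ℝ} (hB : B ⊆ domain) (hBm : MeasurableSet B)
    {n : ℕ} (hinj : InjOn gaussMap^[n] B) : volume B ≤ 2 * 2⁻¹ ^ n := by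
  set E : admissibleWords n → Set ℝ := fun w => domain ∩ invBranchWord w ⁻¹' B
  have hEm : ∀ w, MeasurableSet (E w) :=
    fun w => measurableSet_domain.inter (measurable_invBranchWord w hBm)
  have himage : ∀ w : admissibleWords n,
      volume (invBranchWord w '' E w) ≤ (2 * 2⁻¹ ^ n : ℝ≥0) * volume (E w) := fun w => by
    have h := (lipschitzOnWith_invBranchWord w.2.2).mono (s := E w) inter_subset_left
    rw [w.2.1] at h
    exact h.volume_image_le
  calc volume B ≤ volume (⋃ w : admissibleWords n, invBranchWord w '' E w) :=
        measure_mono (subset_iUnion_image_invBranchWord hB n)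
    _ ≤ ∑' w : admissibleWords n, volume (invBranchWord w '' E w) := measure_iUnion_le _
    _ ≤ ∑' w : admissibleWords n, (2 * 2⁻¹ ^ n : ℝ≥0) * volume (E w) :=
        ENNReal.tsum_le_tsum himage
    _ = (2 * 2⁻¹ ^ n : ℝ≥0) * volume (⋃ w, E w) := by
        rw [ENNReal.tsum_mul_left,
          measure_iUnion (pairwise_disjoint_preimage_invBranchWord hinj) hEm]
    _ ≤ (2 * 2⁻¹ ^ n : ℝ≥0) * volume (Ico (0 : ℝ) 1) := by
        gcongr
        exact iUnion_subset fun w x hx => hx.1.1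
    _ = 2 * 2⁻¹ ^ n := by simp [ENNReal.inv_pow]

theorem volume_eq_zero_of_injOn_iterate {B : Set ℝ} (hB : B ⊆ domain) (hBm : MeasurableSet B)
    (hinj : ∀ n, InjOn gaussMap^[n] B) : volume B = 0 := by
  have hlim : Tendsto (fun n : ℕ => (2 : ℝ≥0∞) * 2⁻¹ ^ n) atTop (𝓝 0) := by
    simpa using ENNReal.Tendsto.const_mul
      (ENNReal.tendsto_pow_atTop_nhds_zero_of_lt_one (ENNReal.inv_lt_one.2 ENNReal.one_lt_two))
      (Or.inr ENNReal.ofNat_ne_top)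
  exact nonpos_iff_eq_zero.1 <| ge_of_tendsto' hlim fun n =>
    volume_le_of_injOn_iterate hB hBm (hinj n)

end Gauss

end

/-- Every Lebesgue-measurable scrambled set for the Gauss system
(on the irrationals of `[0,1)`) has Lebesgue measure zero. -/
theorem stmt_4 (B : Set ℝ)
    (hB : B ⊆ {x : ℝ | x ∈ Set.Ico (0 : ℝ) 1 ∧ Irrational x})
    (hBm : MeasurableSet B)
    (hscr : ∀ x ∈ B, ∀ y ∈ B, x ≠ y →
      liminf (fun n : ℕ => |gaussMap^[n] x - gaussMap^[n] y|) atTop = 0 ∧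
        0 < limsup (fun n : ℕ => |gaussMap^[n] x - gaussMap^[n] y|) atTop) :
    volume B = 0 :=
  Gauss.volume_eq_zero_of_injOn_iterate hB hBm fun n x hx y hy hxy => by_contra fun hne =>
    iterate_ne_of_limsup_abs_sub_pos (hscr x hx y hy hne).2 n hxy
end

section
/- Every maximal scrambled set of the Gauss system is uncountable. -/
open MeasureTheory Filter Set Topology

/-- A scrambled set for the Gauss system: a set of irrationals in `[0,1)` such that every
pair of distinct points is a Li–Yorke pair. -/
def GaussScrambled (S : Set ℝ) : Prop :=
  S ⊆ {x : ℝ | x ∈ Set.Ico (0 : ℝ) 1 ∧ Irrational x} ∧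
    ∀ x ∈ S, ∀ y ∈ S, x ≠ y →
      liminf (fun n : ℕ => |gaussMap^[n] x - gaussMap^[n] y|) atTop = 0 ∧
        0 < limsup (fun n : ℕ => |gaussMap^[n] x - gaussMap^[n] y|) atTop

def gaussDomain : Set ℝ := {x : ℝ | x ∈ Set.Ico (0 : ℝ) 1 ∧ Irrational x}

lemma gaussMap_mem_Ico (x : ℝ) : gaussMap x ∈ Ico 0 1 :=
  ⟨Int.fract_nonneg _, Int.fract_lt_one _⟩

lemma Irrational.gaussMap {x : ℝ} (hx : Irrational x) : Irrational (gaussMap x) :=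
  hx.inv.sub_intCast _

lemma mapsTo_gaussMap : MapsTo gaussMap gaussDomain gaussDomain :=
  fun _ hx => ⟨gaussMap_mem_Ico _, hx.2.gaussMap⟩

lemma pos_of_mem_gaussDomain {x : ℝ} (hx : x ∈ gaussDomain) : 0 < x :=
  hx.1.1.lt_of_ne (fun h => hx.2.ne_zero h.symm)

lemma inv_eq_floor_add_gaussMap {x : ℝ} (hx : 0 ≤ x) :
    x⁻¹ = ⌊x⁻¹⌋₊ + gaussMap x := by
  rw [gaussMap, Int.fract, natCast_floor_eq_intCast_floor (inv_nonneg.2 hx)]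
  ring

lemma eq_inv_floor_add_gaussMap {x : ℝ} (hx : 0 ≤ x) :
    x = (⌊x⁻¹⌋₊ + gaussMap x)⁻¹ := by
  rw [← inv_eq_floor_add_gaussMap hx, inv_inv]

lemma one_le_floor_inv {x : ℝ} (hx : x ∈ gaussDomain) : 1 ≤ ⌊x⁻¹⌋₊ :=
  (Nat.one_le_floor_iff _).2 (one_le_inv₀ (pos_of_mem_gaussDomain hx) |>.2 hx.1.2.le)

/-- Indexed from `0`: `gaussDigit x n` is the partial quotient `aₙ₊₁` of
`x = [0; a₁, a₂, …]`. -/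
noncomputable def gaussDigit (x : ℝ) (n : ℕ) : ℕ := ⌊(gaussMap^[n] x)⁻¹⌋₊

lemma gaussDigit_iterate (x : ℝ) (m n : ℕ) :
    gaussDigit (gaussMap^[m] x) n = gaussDigit x (n + m) := by
  rw [gaussDigit, gaussDigit, Function.iterate_add_apply]

lemma one_le_gaussDigit {x : ℝ} (hx : x ∈ gaussDomain) (n : ℕ) : 1 ≤ gaussDigit x n :=
  one_le_floor_inv (mapsTo_gaussMap.iterate n hx)

lemma irrational_of_forall_gaussMap_iterate_ne_zero {x : ℝ} (hx : x ∈ Ico 0 1)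
    (h : ∀ n, gaussMap^[n] x ≠ 0) : Irrational x := by
  -- the continued fraction algorithm runs through the Gauss orbit, so it never terminates
  have hstream : ∀ n, ∃ b,
      GenContFract.IntFractPair.stream x n = some ⟨b, gaussMap^[n] x⟩ := by
    intro n
    induction n with
    | zero => exact ⟨⌊x⌋, by simp [GenContFract.IntFractPair.stream_zero,
        GenContFract.IntFractPair.of, Int.fract_eq_self.2 hx]⟩
    | succ n ih =>
      obtain ⟨b, hb⟩ := ih
      rw [GenContFract.IntFractPair.stream_succ_of_some hb (h n), Function.iterate_succ_apply']
      exact ⟨_, rfl⟩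
  rintro ⟨q, rfl⟩
  obtain ⟨n, hn⟩ := (GenContFract.terminates_iff_rat (q : ℝ)).2 ⟨q, rfl⟩
  obtain ⟨b, hb⟩ := hstream (n + 1)
  rw [GenContFract.of_terminatedAt_n_iff_succ_nth_intFractPair_stream_eq_none.1 hn] at hb
  exact Option.some_ne_none _ hb.symm

lemma abs_inv_add_inv_add_sub_le {c c' s t : ℝ} (hc : 1 ≤ c) (hc' : 1 ≤ c') (hs : 0 ≤ s)
    (ht : 0 ≤ t) :
    |(c + (c' + s)⁻¹)⁻¹ - (c + (c' + t)⁻¹)⁻¹| ≤ |s - t| / 4 := by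
  have hA : 2 ≤ c * (c' + s) + 1 := by nlinarith
  have hB : 2 ≤ c * (c' + t) + 1 := by nlinarith
  have key : (c + (c' + s)⁻¹)⁻¹ - (c + (c' + t)⁻¹)⁻¹
      = (s - t) / ((c * (c' + s) + 1) * (c * (c' + t) + 1)) := by
    field_simp
    ring
  have hAB : 4 ≤ (c * (c' + s) + 1) * (c * (c' + t) + 1) := by nlinarith
  rw [key, abs_div, abs_of_pos (a := (c * (c' + s) + 1) * _) (by linarith)]
  exact div_le_div_of_nonneg_left (abs_nonneg _) (by norm_num) hAB

/-- `[0; a 0, …, a (n - 1)]` -/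
noncomputable def cfApprox : ℕ → (ℕ → ℕ) → ℝ
  | 0, _ => 0
  | n + 1, a => ((a 0 : ℝ) + cfApprox n (fun i => a (i + 1)))⁻¹

lemma cfApprox_mem_Icc (n : ℕ) {a : ℕ → ℕ} (ha : ∀ i, 1 ≤ a i) :
    cfApprox n a ∈ Icc 0 1 := by
  induction n generalizing a with
  | zero => simp [cfApprox]
  | succ n ih =>
    have h1 : (1 : ℝ) ≤ a 0 := by exact_mod_cast ha 0
    have h2 := (ih fun i => ha (i + 1)).1
    exact ⟨by rw [cfApprox]; positivity, inv_le_one_of_one_le₀ (by linarith)⟩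

lemma abs_cfApprox_sub_le (r : ℕ) {a : ℕ → ℕ} (ha : ∀ i, 1 ≤ a i) (i j : ℕ) :
    |cfApprox (2 * r + i) a - cfApprox (2 * r + j) a| ≤ (1 / 4) ^ r := by
  induction r generalizing a with
  | zero =>
    have hi := cfApprox_mem_Icc i ha
    have hj := cfApprox_mem_Icc j ha
    simpa using abs_sub_le_of_nonneg_of_le hi.1 hi.2 hj.1 hj.2
  | succ r ih =>
    have ha₂ : ∀ i, 1 ≤ a (i + 1 + 1) := fun i => ha _
    rw [show 2 * (r + 1) + i = 2 * r + i + 1 + 1 by ring,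
      show 2 * (r + 1) + j = 2 * r + j + 1 + 1 by ring]
    calc _ ≤ |cfApprox (2 * r + i) (fun i => a (i + 1 + 1))
            - cfApprox (2 * r + j) (fun i => a (i + 1 + 1))| / 4 :=
          abs_inv_add_inv_add_sub_le (by exact_mod_cast ha 0) (by exact_mod_cast ha 1)
            (cfApprox_mem_Icc _ ha₂).1 (cfApprox_mem_Icc _ ha₂).1
      _ ≤ (1 / 4) ^ r / 4 := by gcongr; exact ih ha₂
      _ = (1 / 4) ^ (r + 1) := by ring

lemma cauchySeq_cfApprox {a : ℕ → ℕ} (ha : ∀ i, 1 ≤ a i) : CauchySeq (cfApprox · a) := by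
  rw [Metric.cauchySeq_iff']
  intro ε hε
  obtain ⟨r, hr⟩ := exists_pow_lt_of_lt_one hε (by norm_num : (1 / 4 : ℝ) < 1)
  refine ⟨2 * r, fun n hn => ?_⟩
  obtain ⟨i, rfl⟩ := Nat.exists_eq_add_of_le hn
  exact (abs_cfApprox_sub_le r ha i 0).trans_lt hr

/-- `[0; a 0, a 1, …]`, meaningful when every `a i ≥ 1`. -/
noncomputable def cfValue (a : ℕ → ℕ) : ℝ := limUnder atTop (cfApprox · a)

section cfValue

variable {a : ℕ → ℕ} (ha : ∀ i, 1 ≤ a i)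
include ha

lemma tendsto_cfApprox : Tendsto (cfApprox · a) atTop (𝓝 (cfValue a)) :=
  (cauchySeq_cfApprox ha).tendsto_limUnder

lemma cfValue_nonneg : 0 ≤ cfValue a :=
  (isClosed_Icc.mem_of_tendsto (tendsto_cfApprox ha)
    (.of_forall fun n => cfApprox_mem_Icc n ha)).1

lemma cfValue_eq_inv : cfValue a = ((a 0 : ℝ) + cfValue (fun i => a (i + 1)))⁻¹ := by
  have ha' : ∀ i, 1 ≤ a (i + 1) := fun i => ha _
  have hne : (a 0 : ℝ) + cfValue (fun i => a (i + 1)) ≠ 0 := by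
    have : (1 : ℝ) ≤ a 0 := by exact_mod_cast ha 0
    linarith [cfValue_nonneg ha']
  exact tendsto_nhds_unique ((tendsto_cfApprox ha).comp (tendsto_add_atTop_nat 1))
    ((tendsto_const_nhds.add (tendsto_cfApprox ha')).inv₀ hne)

lemma cfValue_pos : 0 < cfValue a := by
  rw [cfValue_eq_inv ha]
  have : (1 : ℝ) ≤ a 0 := by exact_mod_cast ha 0
  have := cfValue_nonneg fun i => ha (i + 1)
  positivity

lemma cfValue_lt_one : cfValue a < 1 := by
  rw [cfValue_eq_inv ha]
  have : (1 : ℝ) ≤ a 0 := by exact_mod_cast ha 0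
  exact inv_lt_one_of_one_lt₀ (by linarith [cfValue_pos fun i => ha (i + 1)])

lemma floor_inv_cfValue : ⌊(cfValue a)⁻¹⌋₊ = a 0 := by
  have h₀ := cfValue_pos fun i => ha (i + 1)
  have h₁ := cfValue_lt_one fun i => ha (i + 1)
  rw [cfValue_eq_inv ha, inv_inv, Nat.floor_eq_iff (by linarith)]
  constructor <;> linarith

lemma gaussMap_cfValue : gaussMap (cfValue a) = cfValue (fun i => a (i + 1)) := by
  have h := inv_eq_floor_add_gaussMap (cfValue_nonneg ha)
  have h' : (cfValue a)⁻¹ = a 0 + cfValue (fun i => a (i + 1)) := by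
    rw [cfValue_eq_inv ha, inv_inv]
  rw [floor_inv_cfValue ha] at h
  linarith

lemma gaussMap_iterate_cfValue (n : ℕ) :
    gaussMap^[n] (cfValue a) = cfValue (fun i => a (i + n)) := by
  induction n with
  | zero => rfl
  | succ n ih =>
    rw [Function.iterate_succ_apply', ih, gaussMap_cfValue fun i => ha _]
    simp only [add_assoc, add_comm 1 n]

lemma gaussDigit_cfValue (n : ℕ) : gaussDigit (cfValue a) n = a n := by
  rw [gaussDigit, gaussMap_iterate_cfValue ha, floor_inv_cfValue fun i => ha _, zero_add]

lemma cfValue_mem_gaussDomain : cfValue a ∈ gaussDomain :=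
  ⟨⟨cfValue_nonneg ha, cfValue_lt_one ha⟩, irrational_of_forall_gaussMap_iterate_ne_zero
    ⟨cfValue_nonneg ha, cfValue_lt_one ha⟩ fun n => by
      rw [gaussMap_iterate_cfValue ha]; exact (cfValue_pos fun i => ha _).ne'⟩

end cfValue

lemma eq_inv_gaussDigit_add_inv {x : ℝ} (hx : 0 ≤ x) :
    x = (gaussDigit x 0 + (gaussDigit x 1 + gaussMap^[2] x)⁻¹)⁻¹ := by
  conv_lhs => rw [eq_inv_floor_add_gaussMap hx,
    eq_inv_floor_add_gaussMap (gaussMap_mem_Ico x).1]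
  rfl

lemma abs_sub_le_of_gaussDigit_eq (r : ℕ) {x y : ℝ} (hx : x ∈ gaussDomain)
    (hy : y ∈ gaussDomain) (h : ∀ i < 2 * r, gaussDigit x i = gaussDigit y i) :
    |x - y| ≤ (1 / 4) ^ r := by
  induction r generalizing x y with
  | zero =>
    rw [pow_zero]
    exact (abs_sub_lt_of_nonneg_of_lt hx.1.1 hx.1.2 hy.1.1 hy.1.2).le
  | succ r ih =>
    have hx₂ := mapsTo_gaussMap.iterate 2 hx
    have hy₂ := mapsTo_gaussMap.iterate 2 hy
    rw [eq_inv_gaussDigit_add_inv hx.1.1, eq_inv_gaussDigit_add_inv hy.1.1, h 0 (by omega),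
      h 1 (by omega)]
    calc _ ≤ |gaussMap^[2] x - gaussMap^[2] y| / 4 :=
          abs_inv_add_inv_add_sub_le (by exact_mod_cast one_le_gaussDigit hy 0)
            (by exact_mod_cast one_le_gaussDigit hy 1) hx₂.1.1 hy₂.1.1
      _ ≤ (1 / 4) ^ r / 4 := by
          gcongr
          refine ih hx₂ hy₂ fun i hi => ?_
          rw [gaussDigit_iterate, gaussDigit_iterate, h _ (by omega)]
      _ = (1 / 4) ^ (r + 1) := by ring

/-- The answer to a digit `d` of `x`: if `d = 1` then `x > 1/2` and a digit `3` forces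
`y ≤ 1/3`; otherwise `x ≤ 1/2` and the digits `1, 2` force `y ≥ 2/3`. -/
def separatingDigit (d : ℕ) : ℕ := if d = 1 then 3 else 1

lemma le_inv_of_le_floor_inv {x : ℝ} (hx : 0 ≤ x) {n : ℕ} (hn : 0 < n) (h : n ≤ ⌊x⁻¹⌋₊) :
    x ≤ (n : ℝ)⁻¹ :=
  le_inv_of_le_inv₀ (by positivity) ((Nat.le_floor_iff (inv_nonneg.2 hx)).1 h)

lemma one_sixth_le_abs_sub_of_separatingDigit {x y : ℝ} (hx : x ∈ gaussDomain)
    (hy : y ∈ gaussDomain) (hy₀ : gaussDigit y 0 = separatingDigit (gaussDigit x 0)) (hy₁ : gaussDigit y 1 = 2) :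
    1 / 6 ≤ |y - x| := by
  change ⌊y⁻¹⌋₊ = separatingDigit ⌊x⁻¹⌋₊ at hy₀
  change ⌊(gaussMap y)⁻¹⌋₊ = 2 at hy₁
  unfold separatingDigit at hy₀
  split_ifs at hy₀ with hd
  · have hx2 : 2⁻¹ < x := by
      refine inv_lt_of_inv_lt₀ (pos_of_mem_gaussDomain hx) ?_
      have := Nat.lt_floor_add_one x⁻¹
      rw [hd] at this
      norm_num at this
      exact this
    have hy3 : y ≤ ((3 : ℕ) : ℝ)⁻¹ := le_inv_of_le_floor_inv hy.1.1 (by norm_num) hy₀.ge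
    norm_num at hx2 hy3
    exact le_abs.2 (Or.inr (by linarith))
  · have hx2 : x ≤ ((2 : ℕ) : ℝ)⁻¹ :=
      le_inv_of_le_floor_inv hx.1.1 (by norm_num) (by have := one_le_floor_inv hx; omega)
    have hTy : gaussMap y ≤ ((2 : ℕ) : ℝ)⁻¹ :=
      le_inv_of_le_floor_inv (gaussMap_mem_Ico y).1 (by norm_num) hy₁.ge
    have hy2 : (3 / 2)⁻¹ ≤ y := by
      refine inv_le_of_inv_le₀ (pos_of_mem_gaussDomain hy) ?_
      rw [inv_eq_floor_add_gaussMap hy.1.1, hy₀]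
      norm_num at hTy ⊢
      linarith
    norm_num at hx2 hy2
    exact le_abs.2 (Or.inl (by linarith))

def IsLiYorkePair (x y : ℝ) : Prop :=
  liminf (fun n : ℕ => |gaussMap^[n] x - gaussMap^[n] y|) atTop = 0 ∧
    0 < limsup (fun n : ℕ => |gaussMap^[n] x - gaussMap^[n] y|) atTop

lemma IsLiYorkePair.symm {x y : ℝ} (h : IsLiYorkePair x y) : IsLiYorkePair y x := by
  simpa only [IsLiYorkePair, abs_sub_comm (gaussMap^[_] y)] using h

lemma not_isLiYorkePair_self (x : ℝ) : ¬ IsLiYorkePair x x := by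
  simp [IsLiYorkePair]

lemma GaussScrambled.insert {S : Set ℝ} (hS : GaussScrambled S) {y : ℝ} (hy : y ∈ gaussDomain)
    (hyS : ∀ x ∈ S, IsLiYorkePair y x) : GaussScrambled (insert y S) :=
  ⟨insert_subset hy hS.1, pairwise_insert.2 ⟨hS.2, fun x hx _ => ⟨hyS x hx, (hyS x hx).symm⟩⟩⟩

lemma isLiYorkePair_of_frequently {x y : ℝ} (hx : x ∈ gaussDomain) (hy : y ∈ gaussDomain)
    (hclose : ∀ ε > 0, ∃ᶠ n in atTop, |gaussMap^[n] x - gaussMap^[n] y| ≤ ε)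
    {c : ℝ} (hc : 0 < c) (hsep : ∃ᶠ n in atTop, c ≤ |gaussMap^[n] x - gaussMap^[n] y|) :
    IsLiYorkePair x y := by
  set u : ℕ → ℝ := fun n => |gaussMap^[n] x - gaussMap^[n] y|
  have hu₀ : ∀ n, 0 ≤ u n := fun n => abs_nonneg _
  have hu₁ : ∀ n, u n ≤ 1 := fun n => by
    have hxn := (mapsTo_gaussMap.iterate n hx).1
    have hyn := (mapsTo_gaussMap.iterate n hy).1
    exact (abs_sub_lt_of_nonneg_of_lt hxn.1 hxn.2 hyn.1 hyn.2).le
  have hbdd : IsBoundedUnder (· ≤ ·) atTop u := isBoundedUnder_of ⟨1, hu₁⟩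
  have hbdd' : IsBoundedUnder (· ≥ ·) atTop u := isBoundedUnder_of ⟨0, hu₀⟩
  refine ⟨le_antisymm ?_ (le_liminf_of_le hbdd.isCoboundedUnder_ge (.of_forall hu₀)), ?_⟩
  · exact le_of_forall_pos_le_add fun ε hε => by
      simpa using liminf_le_of_frequently_le (hclose ε hε) hbdd'
  · exact hc.trans_le (le_limsup_of_frequently_le hsep hbdd)

/-- The digits in the block `[2 ^ k, 2 ^ (k + 1))` are devoted to `g k`: the first two push the
orbit away from that of `g k`, the others copy the digits of `g k`. -/
noncomputable def liYorkeDigits (g : ℕ → ℝ) (n : ℕ) : ℕ :=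
  if n = 2 ^ Nat.log 2 n then separatingDigit (gaussDigit (g (Nat.log 2 n)) n)
  else if n = 2 ^ Nat.log 2 n + 1 then 2
  else gaussDigit (g (Nat.log 2 n)) n

noncomputable def liYorkePoint (g : ℕ → ℝ) : ℝ := cfValue (liYorkeDigits g)

section liYorkePoint

variable {g : ℕ → ℝ}

lemma liYorkeDigits_two_pow (k : ℕ) :
    liYorkeDigits g (2 ^ k) = separatingDigit (gaussDigit (g k) (2 ^ k)) := by
  simp [liYorkeDigits, Nat.log_pow]

lemma liYorkeDigits_two_pow_add_one {k : ℕ} (hk : 1 ≤ k) :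
    liYorkeDigits g (2 ^ k + 1) = 2 := by
  have hlog : Nat.log 2 (2 ^ k + 1) = k := Nat.log_eq_of_pow_le_of_lt_pow (by omega)
    (by rw [pow_succ]; have := Nat.one_lt_two_pow_iff.2 (by omega : k ≠ 0); omega)
  simp [liYorkeDigits, hlog]

lemma liYorkeDigits_of_two_pow_add_two_le {k n : ℕ} (h₁ : 2 ^ k + 2 ≤ n)
    (h₂ : n < 2 ^ (k + 1)) :
    liYorkeDigits g n = gaussDigit (g k) n := by
  have hlog : Nat.log 2 n = k := Nat.log_eq_of_pow_le_of_lt_pow (by omega) h₂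
  simp only [liYorkeDigits, hlog]
  rw [if_neg (by omega), if_neg (by omega)]

variable (hg : ∀ k, g k ∈ gaussDomain)
include hg

lemma one_le_liYorkeDigits (n : ℕ) : 1 ≤ liYorkeDigits g n := by
  unfold liYorkeDigits separatingDigit
  split_ifs <;> first | omega | exact one_le_gaussDigit (hg _) n

lemma liYorkePoint_mem_gaussDomain : liYorkePoint g ∈ gaussDomain :=
  cfValue_mem_gaussDomain (one_le_liYorkeDigits hg)

lemma gaussDigit_liYorkePoint (n : ℕ) : gaussDigit (liYorkePoint g) n = liYorkeDigits g n :=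
  gaussDigit_cfValue (one_le_liYorkeDigits hg) n

lemma one_sixth_le_abs_sub_iterate_liYorkePoint {k : ℕ} (hk : 1 ≤ k) :
    1 / 6 ≤ |gaussMap^[2 ^ k] (liYorkePoint g) - gaussMap^[2 ^ k] (g k)| := by
  refine one_sixth_le_abs_sub_of_separatingDigit (mapsTo_gaussMap.iterate _ (hg k))
    (mapsTo_gaussMap.iterate _ (liYorkePoint_mem_gaussDomain hg)) ?_ ?_
  · rw [gaussDigit_iterate, gaussDigit_iterate, gaussDigit_liYorkePoint hg, zero_add,
      liYorkeDigits_two_pow]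
  · rw [gaussDigit_iterate, gaussDigit_liYorkePoint hg, add_comm,
      liYorkeDigits_two_pow_add_one hk]

lemma abs_sub_iterate_liYorkePoint_le {k r : ℕ} (hr : 2 * r + 2 ≤ 2 ^ k) :
    |gaussMap^[2 ^ k + 2] (liYorkePoint g) - gaussMap^[2 ^ k + 2] (g k)| ≤ (1 / 4) ^ r := by
  refine abs_sub_le_of_gaussDigit_eq r
    (mapsTo_gaussMap.iterate _ (liYorkePoint_mem_gaussDomain hg))
    (mapsTo_gaussMap.iterate _ (hg k)) fun i hi => ?_
  rw [gaussDigit_iterate, gaussDigit_iterate, gaussDigit_liYorkePoint hg,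
    liYorkeDigits_of_two_pow_add_two_le (k := k) (by omega) (by rw [pow_succ]; omega)]

theorem isLiYorkePair_liYorkePoint {x : ℝ} (hx : ∃ᶠ k in atTop, g k = x) :
    IsLiYorkePair (liYorkePoint g) x := by
  obtain ⟨k₀, rfl⟩ := hx.exists
  refine isLiYorkePair_of_frequently (liYorkePoint_mem_gaussDomain hg) (hg k₀)
    (fun ε hε => ?_) (by norm_num : (0 : ℝ) < 1 / 6) ?_ <;> rw [frequently_atTop] <;> intro N
  · obtain ⟨r, hr⟩ := exists_pow_lt_of_lt_one hε (by norm_num : (1 / 4 : ℝ) < 1)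
    obtain ⟨k, hk, hgk⟩ := frequently_atTop.1 hx (N + 2 * r + 2)
    have := Nat.lt_two_pow_self (n := k)
    refine ⟨2 ^ k + 2, by omega, ?_⟩
    rw [← hgk]
    exact (abs_sub_iterate_liYorkePoint_le hg (by omega)).trans hr.le
  · obtain ⟨k, hk, hgk⟩ := frequently_atTop.1 hx (N + 1)
    have := Nat.lt_two_pow_self (n := k)
    refine ⟨2 ^ k, by omega, ?_⟩
    rw [← hgk]
    exact one_sixth_le_abs_sub_iterate_liYorkePoint hg (by omega)

end liYorkePoint

lemma exists_frequently_eq_of_countable {α : Type*} {S D : Set α} (hS : S.Countable)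
    (hSD : S ⊆ D) (hD : D.Nonempty) :
    ∃ g : ℕ → α, (∀ k, g k ∈ D) ∧ ∀ x ∈ S, ∃ᶠ k in atTop, g k = x := by
  obtain ⟨x₀, hx₀⟩ := hD
  obtain ⟨f, hf⟩ := (hS.insert x₀).exists_eq_range (insert_nonempty x₀ S)
  refine ⟨fun k => f (Nat.unpair k).1, fun k => ?_, fun x hx => ?_⟩
  · exact insert_subset hx₀ hSD (hf ▸ mem_range_self _)
  · obtain ⟨j, rfl⟩ : x ∈ range f := hf ▸ mem_insert_of_mem x₀ hx
    exact frequently_atTop.2 fun N => ⟨Nat.pair j N, Nat.right_le_pair j N, by simp⟩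

theorem exists_isLiYorkePair_of_countable {S : Set ℝ} (hS : S.Countable)
    (hSD : S ⊆ gaussDomain) : ∃ y ∈ gaussDomain, ∀ x ∈ S, IsLiYorkePair y x := by
  obtain ⟨g, hg, hgS⟩ := exists_frequently_eq_of_countable hS hSD
    ⟨_, cfValue_mem_gaussDomain (a := fun _ => 1) fun _ => le_rfl⟩
  exact ⟨liYorkePoint g, liYorkePoint_mem_gaussDomain hg,
    fun x hx => isLiYorkePair_liYorkePoint hg (hgS x hx)⟩

/-- Every maximal scrambled set of the Gauss system is uncountable. -/
theorem stmt_7 (S : Set ℝ) (hS : GaussScrambled S)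
    (hmax : ∀ S' : Set ℝ, GaussScrambled S' → S ⊆ S' → S' = S) :
    ¬ S.Countable := by
  intro hcount
  obtain ⟨y, hy, hLY⟩ := exists_isLiYorkePair_of_countable hcount hS.1
  have hyS : y ∉ S := fun h => not_isLiYorkePair_self y (hLY y h)
  exact hyS (hmax _ (hS.insert hy hLY) (subset_insert y S) ▸ mem_insert y S)
end

section
/- For continued fraction convergents, if q_n(a_1,…,a_n) denotes the denominator of the n-th convergent [a_1,…,a_n], then for all n ≥ 1 and 1 ≤ k ≤ n: (a_k + 1)/2 ≤ q_n(a_1,…,a_n) / q_{n−1}(a_1,…,a_{k−1}, a_{k+1},…,a_n) ≤ a_k + 1. -/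
/-!
Write the sequence as `u ++ a :: v`. Splitting a continuant at a cut gives
`K(u ++ a :: v) = a·PR + PS + QR` and `K(u ++ v) = PR + QS`, where `P = K(u)`, `Q = K(u minus its
last entry)`, `R = K(v)`, `S = K(v minus its first entry)`. Since `Q ≤ P` and `S ≤ R`, both bounds
on the ratio are elementary inequalities in these four numbers and `a ≥ 1`.
-/

/-- The continuant `K(a_1, …, a_n)`; one has `q_n(a_1,…,a_n) = K(a_1,…,a_n)`, the
denominator of the convergent `[a_1,…,a_n]`, satisfying `q_n = a_n q_{n-1} + q_{n-2}`. -/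
def contDenom : List ℕ → ℕ
  | [] => 1
  | [a] => a
  | a :: b :: t => a * contDenom (b :: t) + contDenom t

/- On the empty list both functions take the value `q_{-1} = 0`, which is what makes
`contDenom_append` hold without case distinctions. -/
def contDenomInit : List ℕ → ℕ
  | [] => 0
  | l@(_ :: _) => contDenom l.dropLast

def contDenomTail : List ℕ → ℕ
  | [] => 0
  | _ :: t => contDenom t

lemma contDenom_cons (a : ℕ) (v : List ℕ) :
    contDenom (a :: v) = a * contDenom v + contDenomTail v := by
  cases v <;> simp [contDenom, contDenomTail]

lemma contDenomInit_cons_cons (a b : ℕ) (t : List ℕ) :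
    contDenomInit (a :: b :: t) = a * contDenomInit (b :: t) + contDenomInit t := by
  cases t <;> simp [contDenomInit, contDenom, List.dropLast]

lemma contDenom_append (u v : List ℕ) :
    contDenom (u ++ v) = contDenom u * contDenom v + contDenomInit u * contDenomTail v := by
  induction u using contDenom.induct with
  | case1 => simp [contDenom, contDenomInit]
  | case2 a => simp [contDenom_cons, contDenomInit, contDenom]
  | case3 a b t ih₁ ih₂ =>
    change a * contDenom ((b :: t) ++ v) + contDenom (t ++ v) = _
    rw [ih₁, ih₂, contDenomInit_cons_cons]
    simp only [contDenom]
    ring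

section Positive

variable {l : List ℕ} (hl : ∀ x ∈ l, 1 ≤ x)
include hl

lemma contDenom_pos : 0 < contDenom l := by
  induction l using contDenom.induct with
  | case1 => simp [contDenom]
  | case2 a => exact hl a (by simp)
  | case3 a b t ih₁ _ =>
    have ha := hl a (by simp)
    have hbt := ih₁ (fun x hx => hl x (by simp [hx]))
    simp only [contDenom]
    positivity

lemma contDenomTail_le : contDenomTail l ≤ contDenom l := by
  cases l with
  | nil => simp [contDenomTail, contDenom]
  | cons b t =>
    rw [contDenom_cons]
    exact le_add_right (Nat.le_mul_of_pos_left _ (hl b (by simp)))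

lemma contDenomInit_le : contDenomInit l ≤ contDenom l := by
  cases l with
  | nil => simp [contDenomInit, contDenom]
  | cons b t =>
    have hne : b :: t ≠ [] := List.cons_ne_nil b t
    have hc : 1 ≤ (b :: t).getLast hne := hl _ (List.getLast_mem hne)
    conv_rhs => rw [← List.dropLast_append_getLast hne, contDenom_append]
    exact le_add_right (Nat.le_mul_of_pos_right _ hc)

end Positive

/-- The two bounds, in terms of `P = K(u)`, `Q`, `R = K(v)`, `S` as in the header. -/
lemma insert_ratio_bounds {K : Type*} [Field K] [LinearOrder K] [IsStrictOrderedRing K]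
    {a P Q R S : K} (ha : 1 ≤ a) (hP : 0 < P) (hR : 0 < R) (hQ : 0 ≤ Q) (hS : 0 ≤ S)
    (hQP : Q ≤ P) (hSR : S ≤ R) :
    (a + 1) / 2 ≤ (a * P * R + P * S + Q * R) / (P * R + Q * S) ∧
      (a * P * R + P * S + Q * R) / (P * R + Q * S) ≤ a + 1 := by
  have hden : 0 < P * R + Q * S := by positivity
  have hQS : Q * S ≤ P * R := mul_le_mul hQP hSR hS hP.le
  have hcross : P * S + Q * R ≤ P * R + Q * S := by
    nlinarith [mul_nonneg (sub_nonneg.2 hQP) (sub_nonneg.2 hSR)]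
  constructor
  · rw [div_le_div_iff₀ two_pos hden]
    nlinarith [mul_nonneg (sub_nonneg.2 ha) (sub_nonneg.2 hQS), mul_le_mul_of_nonneg_right hQP hS]
  · rw [div_le_iff₀ hden]
    nlinarith [mul_nonneg (by linarith : (0 : K) ≤ a) (mul_nonneg hQ hS)]

lemma contDenom_insert_ratio_bounds (u v : List ℕ) (a : ℕ) (hu : ∀ x ∈ u, 1 ≤ x)
    (hv : ∀ x ∈ v, 1 ≤ x) (ha : 1 ≤ a) :
    ((a : ℝ) + 1) / 2 ≤ (contDenom (u ++ a :: v) : ℝ) / contDenom (u ++ v) ∧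
      (contDenom (u ++ a :: v) : ℝ) / contDenom (u ++ v) ≤ a + 1 := by
  have hins : (contDenom (u ++ a :: v) : ℝ) =
      a * contDenom u * contDenom v + contDenom u * contDenomTail v +
        contDenomInit u * contDenom v := by
    rw [contDenom_append, contDenom_cons, contDenomTail]
    push_cast
    ring
  rw [hins, contDenom_append]
  push_cast
  exact insert_ratio_bounds (by exact_mod_cast ha) (by exact_mod_cast contDenom_pos hu)
    (by exact_mod_cast contDenom_pos hv) (Nat.cast_nonneg _) (Nat.cast_nonneg _)
    (by exact_mod_cast contDenomInit_le hu) (by exact_mod_cast contDenomTail_le hv)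

/-- For continued fraction convergent denominators, deleting the `k`-th
partial quotient changes the denominator by a factor between `(a_k + 1)/2` and `a_k + 1`. -/
theorem stmt_11 (l : List ℕ) (hpos : ∀ x ∈ l, 1 ≤ x) (k : ℕ) (hk : k < l.length) :
    ((l.get ⟨k, hk⟩ : ℝ) + 1) / 2 ≤ (contDenom l : ℝ) / (contDenom (l.eraseIdx k) : ℝ) ∧
      (contDenom l : ℝ) / (contDenom (l.eraseIdx k) : ℝ) ≤ (l.get ⟨k, hk⟩ : ℝ) + 1 := by
  have hsplit : l = l.take k ++ l.get ⟨k, hk⟩ :: l.drop (k + 1) := by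
    conv_lhs => rw [← List.take_append_drop k l, List.drop_eq_getElem_cons hk]
    rfl
  have hbounds := contDenom_insert_ratio_bounds (l.take k) (l.drop (k + 1)) (l.get ⟨k, hk⟩)
    (fun x hx => hpos x (List.take_subset _ _ hx)) (fun x hx => hpos x (List.drop_subset _ _ hx))
    (hpos _ (List.get_mem l ⟨k, hk⟩))
  rwa [← hsplit, ← List.eraseIdx_eq_take_drop_succ] at hbounds
end
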